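/- arXiv:1511.02455 — 2 statements merged into one kernel-verified Lean document; each statement's English description precedes it below -/
import Mathlib

section
/- Let v₁, …, v_s ∈ ℝ^n be training data, let E be an n × n real matrix and Λ : Fin n → ℝ with Λ i ≥ 0 for all i, such that the data second-moment matrix satisfies ∑_{j=1}^{s} v_j v_jᵀ = E * diagonal(Λ) * Eᵀ. Then for any m × n real matrix W, the RICA reconstruction cost equals the weighted orthonormality cost: ∑_{j=1}^{s} ‖(Wᵀ * W − 1) *ᵥ v_j‖² = ‖(Wᵀ * W − 1) * E * diagonal(fun i => Real.sqrt (Λ i))‖_F², where ‖A‖_F² = ∑_{i,j} (A i j)² is the squared Frobenius norm. -/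
open Matrix

/-- Auxiliary: `∑ i, ((A *ᵥ u) i)^2 = trace (A * vecMulVec u u * Aᵀ)`. -/
lemma rica_aux_sq_eq_trace {m n : ℕ} (A : Matrix (Fin m) (Fin n) ℝ) (u : Fin n → ℝ) :
    ∑ i, ((A *ᵥ u) i) ^ 2 = trace (A * vecMulVec u u * Aᵀ) := by
  simp only [trace, diag_apply, mul_apply, vecMulVec_apply, mulVec, dotProduct,
    transpose_apply, sq, Finset.sum_mul, Finset.mul_sum]
  refine Finset.sum_congr rfl fun i _ => ?_
  rw [Finset.sum_comm]
  refine Finset.sum_congr rfl fun k _ => Finset.sum_congr rfl fun l _ => ?_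
  ring

/-- Auxiliary: squared Frobenius norm equals `trace (B * Bᵀ)`. -/
lemma rica_aux_frob {m n : ℕ} (B : Matrix (Fin m) (Fin n) ℝ) :
    ∑ i, ∑ k, (B i k) ^ 2 = trace (B * Bᵀ) := by
  simp [trace, diag_apply, mul_apply, sq]

/-- RICA's reconstruction term equals the weighted orthonormality cost: if the
data second-moment matrix decomposes as `∑ j, vⱼ vⱼᵀ = E * diagonal Λ * Eᵀ` with
`Λ ≥ 0`, then for any forward weight `W`,
`∑ j, ‖(WᵀW − 1) *ᵥ vⱼ‖²` (squared Euclidean norm, written as a sum of squares)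
equals the squared Frobenius norm of `(WᵀW − 1) * E * diagonal (√Λ)`. -/
theorem rica_reconstruction_eq_orthonormality_cost
    {s m n : ℕ} (v : Fin s → (Fin n → ℝ))
    (E : Matrix (Fin n) (Fin n) ℝ) (Λ : Fin n → ℝ)
    (hΛ : ∀ i, 0 ≤ Λ i)
    (hmom : ∑ j, Matrix.vecMulVec (v j) (v j) = E * Matrix.diagonal Λ * Eᵀ)
    (W : Matrix (Fin m) (Fin n) ℝ) :
    ∑ j, ∑ i, (((Wᵀ * W - 1) *ᵥ v j) i) ^ 2 =
      ∑ i : Fin n, ∑ k : Fin n,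
        (((Wᵀ * W - 1) * E * Matrix.diagonal (fun i => Real.sqrt (Λ i)) :
          Matrix (Fin n) (Fin n) ℝ) i k) ^ 2 := by
  set A := Wᵀ * W - 1 with hA
  have hdiag : (Matrix.diagonal (fun i => Real.sqrt (Λ i)) : Matrix (Fin n) (Fin n) ℝ) *
      (Matrix.diagonal (fun i => Real.sqrt (Λ i)))ᵀ = Matrix.diagonal Λ := by
    rw [diagonal_transpose, diagonal_mul_diagonal]
    exact congrArg Matrix.diagonal (funext fun i => Real.mul_self_sqrt (hΛ i))
  calc ∑ j, ∑ i, ((A *ᵥ v j) i) ^ 2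
      = ∑ j, trace (A * vecMulVec (v j) (v j) * Aᵀ) := by
        exact Finset.sum_congr rfl fun j _ => rica_aux_sq_eq_trace A (v j)
    _ = trace (A * (∑ j, vecMulVec (v j) (v j)) * Aᵀ) := by
        rw [Finset.mul_sum, Finset.sum_mul, trace_sum]
    _ = trace ((A * E * Matrix.diagonal (fun i => Real.sqrt (Λ i))) *
          (A * E * Matrix.diagonal (fun i => Real.sqrt (Λ i)))ᵀ) := by
        rw [hmom]
        simp only [transpose_mul]
        rw [show A * E * Matrix.diagonal (fun i => Real.sqrt (Λ i)) *
            ((Matrix.diagonal (fun i => Real.sqrt (Λ i)))ᵀ * (Eᵀ * Aᵀ)) =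
            A * (E * (Matrix.diagonal (fun i => Real.sqrt (Λ i)) *
              (Matrix.diagonal (fun i => Real.sqrt (Λ i)))ᵀ) * Eᵀ) * Aᵀ by
          simp only [Matrix.mul_assoc], hdiag]
    _ = ∑ i : Fin n, ∑ k : Fin n,
          ((A * E * Matrix.diagonal (fun i => Real.sqrt (Λ i))) i k) ^ 2 :=
        (rica_aux_frob _).symm
end

section
/- There exist constants c₁ > 0 and c₂ > 0 such that for every natural number M ≥ 1: c₁ * Real.sqrt M ≤ ∑_{m=0}^{M} ((m+1) * (Nat.catalan m : ℝ)) / 4^m ≤ c₂ * Real.sqrt M. (Consequently the expected number of search steps at Turing step N, whose dominant term is (1/2^N)·∑_{n=0}^{N−1}(N−n)|P_n| with |P_n| = 2·C(N−n−2,0)·2^n, is Θ(√N), giving the search-based simulation algorithm average time complexity O(√N) per step.) -/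
noncomputable def cbR (n : ℕ) : ℝ := (Nat.centralBinom n : ℝ) / 4 ^ n

lemma cbR_pos (n : ℕ) : 0 < cbR n := by
  have h : 0 < (Nat.centralBinom n : ℝ) := by exact_mod_cast n.centralBinom_pos
  unfold cbR
  positivity

lemma cbR_rec (n : ℕ) : ((n : ℝ) + 1) * cbR (n + 1) * 2 = (2 * n + 1) * cbR n := by
  unfold cbR
  have h := Nat.succ_mul_centralBinom_succ n
  have h' : ((n : ℝ) + 1) * (Nat.centralBinom (n + 1) : ℝ)
      = 2 * (2 * n + 1) * (Nat.centralBinom n : ℝ) := by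
    exact_mod_cast congrArg (Nat.cast : ℕ → ℝ) h
  have h4 : (4 : ℝ) ^ (n + 1) = 4 ^ n * 4 := by ring
  field_simp [h4]
  linear_combination (2 * (4: ℝ) ^ n) * h'

lemma cbR_succ (n : ℕ) : cbR (n + 1) = (2 * n + 1) * cbR n / (2 * ((n : ℝ) + 1)) := by
  have h := cbR_rec n
  have hn : (0 : ℝ) < (n : ℝ) + 1 := by positivity
  field_simp
  nlinarith [h]

lemma cbR_sq_lower : ∀ n : ℕ, 1 ≤ n → (1 : ℝ) / 4 ≤ (n : ℝ) * (cbR n) ^ 2 := by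
  intro n hn
  induction n with
  | zero => omega
  | succ k ih =>
    rcases Nat.eq_or_lt_of_le hn with h1 | h1
    · have hk : k = 0 := by omega
      subst hk
      have hc : Nat.centralBinom 1 = 2 := rfl
      have : cbR 1 = 1 / 2 := by unfold cbR; rw [hc]; norm_num
      rw [this]; norm_num
    · have hk : 1 ≤ k := by omega
      have hb := ih hk
      have hkpos : (1 : ℝ) ≤ (k : ℝ) := by exact_mod_cast hk
      rw [cbR_succ k]
      have hk1 : (0 : ℝ) < 2 * ((k : ℝ) + 1) := by positivity
      have hbpos := cbR_pos k
      have key : ((k : ℝ) + 1) * ((2 * k + 1) * cbR k / (2 * ((k : ℝ) + 1))) ^ 2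
          = (2 * k + 1) ^ 2 / (4 * ((k : ℝ) + 1)) * (cbR k) ^ 2 := by
        field_simp
        ring
      push_cast
      rw [key]
      have hfrac : (k : ℝ) ≤ (2 * k + 1) ^ 2 / (4 * ((k : ℝ) + 1)) := by
        rw [le_div_iff₀ (by positivity)]
        nlinarith
      nlinarith [sq_nonneg (cbR k), hb]

lemma cbR_sq_upper : ∀ n : ℕ, (2 * (n : ℝ) + 1) * (cbR n) ^ 2 ≤ 1 := by
  intro n
  induction n with
  | zero =>
    have hc : Nat.centralBinom 0 = 1 := rfl
    have : cbR 0 = 1 := by unfold cbR; rw [hc]; norm_num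
    rw [this]; norm_num
  | succ k ih =>
    rw [cbR_succ k]
    have hbpos := cbR_pos k
    have key : (2 * ((k : ℝ) + 1) + 1) * ((2 * k + 1) * cbR k / (2 * ((k : ℝ) + 1))) ^ 2
        = (2 * k + 3) * (2 * k + 1) / (2 * k + 2) ^ 2 * ((2 * (k : ℝ) + 1) * (cbR k) ^ 2) := by
      field_simp
      ring
    push_cast
    rw [key]
    have hfrac : (2 * (k : ℝ) + 3) * (2 * k + 1) / (2 * k + 2) ^ 2 ≤ 1 := by
      rw [div_le_one (by positivity)]
      nlinarith
    have hnn : (0 : ℝ) ≤ (2 * (k : ℝ) + 1) * (cbR k) ^ 2 := by positivity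
    calc (2 * (k : ℝ) + 3) * (2 * k + 1) / (2 * k + 2) ^ 2 * ((2 * (k : ℝ) + 1) * (cbR k) ^ 2)
        ≤ 1 * ((2 * (k : ℝ) + 1) * (cbR k) ^ 2) := by
          apply mul_le_mul_of_nonneg_right hfrac hnn
      _ ≤ 1 := by linarith [ih]

lemma sum_eq (M : ℕ) :
    ∑ m ∈ Finset.range (M + 1), ((m + 1 : ℝ) * (catalan m : ℝ)) / 4 ^ m
      = (2 * (M : ℝ) + 1) * cbR M := by
  have hterm : ∀ m : ℕ, ((m + 1 : ℝ) * (catalan m : ℝ)) / 4 ^ m = cbR m := by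
    intro m
    unfold cbR
    congr 1
    exact_mod_cast congrArg (Nat.cast : ℕ → ℝ) (succ_mul_catalan_eq_centralBinom m)
  induction M with
  | zero =>
    have hc : Nat.centralBinom 0 = 1 := rfl
    rw [Finset.sum_range_one, hterm 0]
    unfold cbR
    rw [hc]
    norm_num
  | succ k ih =>
    rw [Finset.sum_range_succ, ih, hterm (k + 1), cbR_succ k]
    have hk1 : (0 : ℝ) < 2 * ((k : ℝ) + 1) := by positivity
    push_cast
    field_simp

/-- The expected search cost of the search-based Turing machine simulation is
`Θ(√N)`: there are constants `c₁, c₂ > 0` such that for all `M ≥ 1`,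
`c₁ √M ≤ ∑_{m=0}^{M} (m+1)·catalan(m)/4^m ≤ c₂ √M`. -/
theorem expected_search_steps_theta_sqrt :
    ∃ c₁ : ℝ, 0 < c₁ ∧ ∃ c₂ : ℝ, 0 < c₂ ∧ ∀ M : ℕ, 1 ≤ M →
      c₁ * Real.sqrt M ≤
          ∑ m ∈ Finset.range (M + 1), ((m + 1 : ℝ) * (catalan m : ℝ)) / 4 ^ m ∧
        ∑ m ∈ Finset.range (M + 1), ((m + 1 : ℝ) * (catalan m : ℝ)) / 4 ^ m ≤
          c₂ * Real.sqrt M := by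
  refine ⟨1, one_pos, 3, by norm_num, fun M hM => ?_⟩
  rw [sum_eq M]
  set x : ℝ := (2 * (M : ℝ) + 1) * cbR M with hx
  have hMpos : (1 : ℝ) ≤ (M : ℝ) := by exact_mod_cast hM
  have hbpos := cbR_pos M
  have hxpos : 0 < x := by positivity
  have hlow := cbR_sq_lower M hM
  have hup := cbR_sq_upper M
  constructor
  · -- √M ≤ x
    have hx2 : (M : ℝ) ≤ x ^ 2 := by
      have : x ^ 2 = (2 * (M : ℝ) + 1) ^ 2 * (cbR M) ^ 2 := by rw [hx]; ring
      nlinarith [sq_nonneg (cbR M)]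
    have h := Real.sqrt_le_sqrt hx2
    rw [Real.sqrt_sq hxpos.le] at h
    linarith
  · -- x ≤ 3 √M
    have hx2 : x ^ 2 ≤ 9 * (M : ℝ) := by
      have : x ^ 2 = (2 * (M : ℝ) + 1) * ((2 * (M : ℝ) + 1) * (cbR M) ^ 2) := by
        rw [hx]; ring
      nlinarith
    have h1 : x = Real.sqrt (x ^ 2) := (Real.sqrt_sq hxpos.le).symm
    have h2 : Real.sqrt (x ^ 2) ≤ Real.sqrt (9 * (M : ℝ)) := Real.sqrt_le_sqrt hx2
    have h3 : Real.sqrt (9 * (M : ℝ)) = 3 * Real.sqrt M := by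
      rw [show (9 : ℝ) * M = 3 ^ 2 * M by norm_num,
        Real.sqrt_mul (by positivity) (M : ℝ), Real.sqrt_sq (by norm_num : (0:ℝ) ≤ 3)]
    rw [h1, ← h3]
    exact h2
end
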